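/- arXiv:1310.4637 — 4 statements merged into one kernel-verified Lean document; each statement's English description precedes it below -/
import Mathlib

section
/- For all integers n ≥ 0 and k ≥ 1, the Daehee number of order k satisfies D_n^(k) = S_1(n+k, k) / C(n+k, k), where S_1 denotes the signed Stirling numbers of the first kind and C(n+k,k) is the binomial coefficient. -/
/-!
Write `L = log(1+t)`. From `(1+t) L' = 1` we get `(1+t) (L^(k+1))' = (k+1) L^k`, which on
coefficients says that `m! [t^m] L^k / k!` obeys the recurrence `s(m+1,k+1) = s(m,k) - m s(m,k+1)`
imposed by `(x)_(m+1) = (x)_m (x - m)` on the coefficients `s(m,k)` of the falling factorial.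
The initial values agree, so `k! s(m,k) = m! [t^m] L^k`; at `m = n + k` the right-hand side is
`(n+k)! D_n / n!`.
-/

open PowerSeries Polynomial Finset

/-- `log(1+t) = Σ_{n≥1} (-1)^{n+1} t^n / n` as a formal power series over ℚ. -/
noncomputable def logOneAdd : PowerSeries ℚ :=
  PowerSeries.mk fun n => if n = 0 then 0 else (-1) ^ (n + 1) / (n : ℚ)

/-- `−log(1−t) = Σ_{n≥1} t^n / n` as a formal power series over ℚ. -/
noncomputable def negLogOneSub : PowerSeries ℚ :=
  PowerSeries.mk fun n => if n = 0 then 0 else 1 / (n : ℚ)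

/-- `e^t = Σ_{n≥0} t^n / n!` as a formal power series over ℚ. -/
noncomputable def expQ : PowerSeries ℚ :=
  PowerSeries.mk fun n => 1 / (n.factorial : ℚ)

/-- `log(1+t)` as a formal power series with coefficients in ℚ[x]. -/
noncomputable def logOneAddP : PowerSeries (Polynomial ℚ) :=
  PowerSeries.mk fun n => Polynomial.C (if n = 0 then 0 else (-1) ^ (n + 1) / (n : ℚ))

/-- `−log(1−t)` as a formal power series with coefficients in ℚ[x]. -/
noncomputable def negLogOneSubP : PowerSeries (Polynomial ℚ) :=
  PowerSeries.mk fun n => Polynomial.C (if n = 0 then 0 else 1 / (n : ℚ))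

/-- `e^t` as a formal power series with coefficients in ℚ[x]. -/
noncomputable def expP : PowerSeries (Polynomial ℚ) :=
  PowerSeries.mk fun n => Polynomial.C (1 / (n.factorial : ℚ))

/-- `e^{xt} = Σ_{n≥0} x^n t^n / n!` as a formal power series with coefficients in ℚ[x]. -/
noncomputable def expXT : PowerSeries (Polynomial ℚ) :=
  PowerSeries.mk fun n => Polynomial.C (1 / (n.factorial : ℚ)) * Polynomial.X ^ n

/-- The binomial polynomial `x(x−1)⋯(x−n+1)/n! ∈ ℚ[x]`. -/
noncomputable def binomPoly (n : ℕ) : Polynomial ℚ :=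
  Polynomial.C (1 / (n.factorial : ℚ)) *
    ∏ i ∈ Finset.range n, (Polynomial.X - Polynomial.C (i : ℚ))

/-- `(1+t)^x = Σ_{n≥0} C(x,n) t^n` as a formal power series with coefficients in ℚ[x]. -/
noncomputable def onePlusTX : PowerSeries (Polynomial ℚ) :=
  PowerSeries.mk binomPoly

/-- `(1−t)^x = Σ_{n≥0} (−1)^n C(x,n) t^n` as a formal power series with coefficients in ℚ[x]. -/
noncomputable def oneSubTX : PowerSeries (Polynomial ℚ) :=
  PowerSeries.mk fun n => (-1) ^ n * binomPoly n

open scoped Nat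

lemma one_add_X_mul_derivative_logOneAdd : (1 + PowerSeries.X) * d⁄dX ℚ logOneAdd = 1 := by
  ext m
  cases m with
  | zero =>
    rw [add_mul, one_mul, map_add, coeff_zero_X_mul, PowerSeries.coeff_derivative]
    simp [logOneAdd]
  | succ m =>
    rw [add_mul, one_mul, map_add, coeff_succ_X_mul, PowerSeries.coeff_derivative,
      PowerSeries.coeff_derivative]
    simp only [logOneAdd, coeff_mk, Nat.succ_ne_zero, if_false, PowerSeries.coeff_one]
    push_cast
    field_simp
    ring

lemma one_add_X_mul_derivative_logOneAdd_pow_succ (k : ℕ) :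
    (1 + PowerSeries.X) * d⁄dX ℚ (logOneAdd ^ (k + 1))
      = ((k + 1 : ℕ) : ℚ⟦X⟧) * logOneAdd ^ k := by
  rw [Derivation.leibniz_pow, Nat.add_sub_cancel, smul_eq_mul, nsmul_eq_mul, mul_left_comm,
    mul_left_comm (1 + PowerSeries.X), one_add_X_mul_derivative_logOneAdd, mul_one]

lemma coeff_logOneAdd_pow_succ_recurrence (m k : ℕ) :
    ((m : ℚ) + 1) * PowerSeries.coeff (m + 1) (logOneAdd ^ (k + 1))
        + m * PowerSeries.coeff m (logOneAdd ^ (k + 1))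
      = ((k : ℚ) + 1) * PowerSeries.coeff m (logOneAdd ^ k) := by
  have h := congrArg (PowerSeries.coeff m) (one_add_X_mul_derivative_logOneAdd_pow_succ k)
  rw [add_mul, one_mul, map_add, PowerSeries.coeff_derivative, ← map_natCast PowerSeries.C,
    PowerSeries.coeff_C_mul] at h
  cases m with
  | zero => simpa using h
  | succ m =>
    rw [coeff_succ_X_mul, PowerSeries.coeff_derivative] at h
    push_cast at h ⊢
    linear_combination h

lemma constantCoeff_logOneAdd : PowerSeries.constantCoeff logOneAdd = 0 := by
  simp [logOneAdd]

lemma factorial_mul_coeff_prod_X_sub_C_eq_factorial_mul_coeff_logOneAdd_pow (m k : ℕ) :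
    (k ! : ℚ) * (∏ i ∈ range m, (Polynomial.X - Polynomial.C (i : ℚ))).coeff k
      = m ! * PowerSeries.coeff m (logOneAdd ^ k) := by
  induction m generalizing k with
  | zero =>
    cases k with
    | zero => simp
    | succ k => simp [coeff_zero_eq_constantCoeff, constantCoeff_logOneAdd, Polynomial.coeff_one]
  | succ m ih =>
    cases k with
    | zero => simp [Finset.prod_range_succ', PowerSeries.coeff_one]
    | succ k =>
      rw [Finset.prod_range_succ, coeff_mul_X_sub_C]
      have ih' := ih (k + 1)
      push_cast [Nat.factorial_succ] at ih' ⊢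
      linear_combination ((k : ℚ) + 1) * ih k - (m : ℚ) * ih'
        - (m ! : ℚ) * coeff_logOneAdd_pow_succ_recurrence m k

theorem higher_order_daehee_eq_stirling_div_choose_general
    (k : ℕ) (n : ℕ)
    (D : ℕ → ℚ)
    (hD : logOneAdd ^ k
      = PowerSeries.X ^ k * PowerSeries.mk (fun m => D m / (m.factorial : ℚ)))
    (S1 : ℕ → ℕ → ℤ)
    (hS1 : ∀ m : ℕ,
      (∏ i ∈ Finset.range m, (Polynomial.X - Polynomial.C (i : ℚ)))
        = ∑ l ∈ Finset.range (m + 1), Polynomial.C ((S1 m l : ℚ)) * Polynomial.X ^ l) :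
    D n = (S1 (n + k) k : ℚ) / ((n + k).choose k : ℚ) := by
  have hS1k : (∏ i ∈ range (n + k), (Polynomial.X - Polynomial.C (i : ℚ))).coeff k
      = (S1 (n + k) k : ℚ) := by
    rw [hS1, Polynomial.finsetSum_coeff]
    simp [Polynomial.coeff_X_pow]
  have hDn : PowerSeries.coeff (n + k) (logOneAdd ^ k) = D n / n ! := by
    rw [hD, PowerSeries.coeff_X_pow_mul, PowerSeries.coeff_mk]
  have h := factorial_mul_coeff_prod_X_sub_C_eq_factorial_mul_coeff_logOneAdd_pow (n + k) k
  rw [hS1k, hDn] at h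
  rw [← Nat.choose_symm_add, Nat.cast_add_choose]
  field_simp at h ⊢
  linear_combination -h

/-- For `n ≥ 0`, `k ≥ 1`, the higher-order Daehee numbers `D_n^(k)`,
defined by `(log(1+t)/t)^k = Σ_n D_n^(k) t^n/n!` (encoded multiplicatively as
`log(1+t)^k = t^k · Σ_n D_n^(k) t^n/n!`), satisfy
`D_n^(k) = S_1(n+k,k) / C(n+k,k)`, where `S_1` is the signed Stirling number of the first
kind, defined by `(x)_n = Σ_{l=0}^n S_1(n,l) x^l`. -/
theorem higher_order_daehee_eq_stirling_div_choose
    (k : ℕ) (hk : 1 ≤ k) (n : ℕ)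
    (D : ℕ → ℚ)
    (hD : logOneAdd ^ k
      = PowerSeries.X ^ k * PowerSeries.mk (fun m => D m / (m.factorial : ℚ)))
    (S1 : ℕ → ℕ → ℤ)
    (hS1 : ∀ m : ℕ,
      (∏ i ∈ Finset.range m, (Polynomial.X - Polynomial.C (i : ℚ)))
        = ∑ l ∈ Finset.range (m + 1), Polynomial.C ((S1 m l : ℚ)) * Polynomial.X ^ l) :
    D n = (S1 (n + k) k : ℚ) / ((n + k).choose k : ℚ) :=
  higher_order_daehee_eq_stirling_div_choose_general k n D hD S1 hS1
end

section
/- For all integers n ≥ 0 and k ≥ 1, the Daehee number of order k satisfies D_n^(k) = B_n^{(n+k+1)}(1), the value at 1 of the n-th Bernoulli polynomial of order n+k+1. -/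
open PowerSeries Polynomial Finset

/-!
`D_n^(k) / n!` is the coefficient of `t^(n+k)` in `log(1+t)^k`, and `log(1+t)` is the
compositional inverse of `e^t - 1`. Lagrange inversion turns that coefficient into the
coefficient of `t^n` in `e^t (t / (e^t - 1))^(n+k+1)`, which by the generating function of the
Bernoulli polynomials at `x = 1` is `B_n^(n+k+1)(1) / n!`.
-/

namespace PowerSeries

section Lagrange

variable {K : Type*} [Field K] [CharZero K]

/-- This is the residue of `G' / G^(m+1)` for `G = X * u`, which vanishes for `m ≠ 0` since
`G' / G^(m+1)` is then a derivative. -/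
theorem coeff_derivative_X_mul_mul_inv_pow {u : K⟦X⟧} (hu : constantCoeff u ≠ 0) (m : ℕ) :
    coeff m (d⁄dX K (X * u) * u⁻¹ ^ (m + 1)) = if m = 0 then 1 else 0 := by
  set v := u⁻¹
  have huv : u * v = 1 := PowerSeries.mul_inv_cancel u hu
  have hderiv : d⁄dX K (X * u) = u + X * d⁄dX K u := by
    rw [Derivation.leibniz, derivative_X, smul_eq_mul, smul_eq_mul]; ring
  rcases m with _ | s
  · have : constantCoeff u * constantCoeff v = 1 := by rw [← map_mul, huv, map_one]
    simpa [hderiv] using this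
  · have hdiff : d⁄dX K (X * u) * v = 1 - X * u * d⁄dX K v := by
      have h := congrArg (d⁄dX K) (show X * u * v = X by rw [mul_assoc, huv, mul_one])
      rw [Derivation.leibniz, derivative_X, smul_eq_mul, smul_eq_mul] at h
      linear_combination h
    have hsplit : d⁄dX K (X * u) * v ^ (s + 2) = v ^ (s + 1) - X * (v ^ s * d⁄dX K v) := by
      calc d⁄dX K (X * u) * v ^ (s + 2) = (d⁄dX K (X * u) * v) * v ^ (s + 1) := by ring
        _ = v ^ (s + 1) - X * (v ^ s * d⁄dX K v) * (u * v) := by rw [hdiff]; ring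
        _ = _ := by rw [huv, mul_one]
    have hpow : coeff s (d⁄dX K (v ^ (s + 1))) = (s + 1) * coeff s (v ^ s * d⁄dX K v) := by
      rw [derivative_pow, Nat.add_sub_cancel, mul_assoc, ← map_natCast (C (R := K)), coeff_C_mul]
      push_cast; ring
    rw [coeff_derivative] at hpow
    rw [if_neg (Nat.succ_ne_zero s), hsplit, map_sub, coeff_succ_X_mul, sub_eq_zero]
    exact mul_left_cancel₀ (Nat.cast_add_one_ne_zero (R := K) s) (by rw [← hpow]; ring)

theorem coeff_X_mul_pow_mul_derivative_mul_inv_pow {u : K⟦X⟧} (hu : constantCoeff u ≠ 0)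
    {j N : ℕ} (hj : j ≤ N) :
    coeff N ((X * u) ^ j * (d⁄dX K (X * u) * u⁻¹ ^ (N + 1))) = if j = N then 1 else 0 := by
  have hpow : u ^ j * u⁻¹ ^ (N + 1) = u⁻¹ ^ (N - j + 1) := by
    rw [show N + 1 = (N - j + 1) + j by omega, pow_add, ← mul_assoc, mul_comm, ← mul_assoc,
      ← mul_pow, PowerSeries.inv_mul_cancel u hu, one_pow, one_mul]
  have hsplit : (X * u) ^ j * (d⁄dX K (X * u) * u⁻¹ ^ (N + 1))
      = X ^ j * (d⁄dX K (X * u) * u⁻¹ ^ (N - j + 1)) := by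
    rw [← hpow]; ring
  rw [hsplit, coeff_X_pow_mul', if_pos hj, coeff_derivative_X_mul_mul_inv_pow hu]
  simp only [show N - j = 0 ↔ j = N by omega]

/-- Lagrange inversion, for the series `X * u` with `u` invertible. -/
theorem coeff_eq_coeff_subst_X_mul_mul_derivative {u : K⟦X⟧} (hu : constantCoeff u ≠ 0)
    (f : K⟦X⟧) (N : ℕ) :
    coeff N f = coeff N (f.subst (X * u) * (d⁄dX K (X * u) * u⁻¹ ^ (N + 1))) := by
  set G : K⟦X⟧ := X * u
  set W := d⁄dX K G * u⁻¹ ^ (N + 1)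
  have hG : HasSubst G := HasSubst.of_constantCoeff_zero' (by simp [G])
  have htail : coeff N ((X ^ (N + 1) * mk fun i ↦ coeff (i + (N + 1)) f).subst G * W) = 0 := by
    rw [subst_mul hG, subst_pow hG, subst_X hG, mul_pow, mul_assoc, mul_assoc, coeff_X_pow_mul',
      if_neg (by omega)]
  have hhead : (trunc (N + 1) f : K⟦X⟧).subst G
      = ∑ j ∈ Finset.range (N + 1), C (coeff j f) * G ^ j := by
    rw [subst_coe hG, Polynomial.aeval_eq_sum_range' (natDegree_trunc_lt f N)]
    refine Finset.sum_congr rfl fun j hj ↦ ?_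
    rw [coeff_trunc, if_pos (Finset.mem_range.1 hj), smul_eq_C_mul]
  conv_rhs => rw [eq_X_pow_mul_shift_add_trunc (N + 1) f, subst_add hG, add_mul, map_add, htail,
    zero_add, hhead, Finset.sum_mul, map_sum]
  rw [Finset.sum_congr rfl fun j hj ↦ by
    rw [mul_assoc, coeff_C_mul, coeff_X_mul_pow_mul_derivative_mul_inv_pow hu
      (Nat.lt_succ_iff.1 (Finset.mem_range.1 hj))]]
  simp

end Lagrange

section LogExp

variable {A : Type*} [CommRing A] [Algebra ℚ A]

theorem one_add_X_mul_derivative_log : (1 + X) * d⁄dX A (log A) = 1 := by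
  ext (_ | n)
  · simp [deriv_log]
  · simp [deriv_log, add_mul, coeff_succ_X_mul, pow_succ]

theorem log_subst_exp_sub_one : (log A).subst (exp A - 1) = X := by
  have : IsAddTorsionFree A := .of_module_rat A
  have hg : HasSubst (exp A - 1) := HasSubst.exp_sub_one
  refine derivative.ext ?_ ?_
  · have h := congrArg (subst (exp A - 1)) (one_add_X_mul_derivative_log (A := A))
    have h1 : (1 : A⟦X⟧).subst (exp A - 1) = 1 := by rw [← coe_substAlgHom hg, map_one]
    rw [subst_mul hg, subst_add hg, subst_X hg, h1, add_sub_cancel] at h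
    rw [derivative_subst hg, map_sub, derivative_exp, derivative_one, sub_zero, mul_comm, h,
      derivative_X]
  · rw [constantCoeff_X]
    exact constantCoeff_subst_eq_zero
      (by rw [map_sub, map_one, ← constantCoeff_eq, constantCoeff_exp, sub_self]) _
      constantCoeff_log

end LogExp

end PowerSeries

noncomputable def expSubOneDivX : ℚ⟦X⟧ := PowerSeries.mk fun n ↦ coeff (n + 1) (exp ℚ)

theorem X_mul_expSubOneDivX : PowerSeries.X * expSubOneDivX = exp ℚ - 1 := by
  conv_rhs => rw [PowerSeries.eq_X_mul_shift_add_const (exp ℚ)]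
  simp [expSubOneDivX, constantCoeff_exp]

theorem constantCoeff_expSubOneDivX : constantCoeff expSubOneDivX ≠ 0 := by
  simp [expSubOneDivX, ← PowerSeries.coeff_zero_eq_constantCoeff_apply]

theorem logOneAdd_eq_log : logOneAdd = log ℚ := by
  ext n; simp [logOneAdd]

theorem map_eval_one_expP : PowerSeries.map (Polynomial.evalRingHom 1) expP = exp ℚ := by
  ext n; simp [expP]

theorem map_eval_one_expXT : PowerSeries.map (Polynomial.evalRingHom 1) expXT = exp ℚ := by
  ext n; simp [expXT]

theorem coeff_log_pow_eq_coeff_exp_mul_inv_pow (n k : ℕ) :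
    PowerSeries.coeff (n + k) (log ℚ ^ k)
      = PowerSeries.coeff n (exp ℚ * expSubOneDivX⁻¹ ^ (n + k + 1)) := by
  rw [coeff_eq_coeff_subst_X_mul_mul_derivative constantCoeff_expSubOneDivX, X_mul_expSubOneDivX,
    subst_pow HasSubst.exp_sub_one, log_subst_exp_sub_one, map_sub, derivative_exp,
    PowerSeries.derivative_one, sub_zero, PowerSeries.coeff_X_pow_mul]

theorem eq_exp_mul_inv_pow_of_X_pow_mul_exp {α : ℕ} {S : ℚ⟦X⟧}
    (h : PowerSeries.X ^ α * exp ℚ = (exp ℚ - 1) ^ α * S) :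
    S = exp ℚ * expSubOneDivX⁻¹ ^ α := by
  have hexp : exp ℚ = expSubOneDivX ^ α * S := by
    refine mul_left_cancel₀ (pow_ne_zero α PowerSeries.X_ne_zero) ?_
    rw [h, ← X_mul_expSubOneDivX]
    ring
  calc S = (expSubOneDivX * expSubOneDivX⁻¹) ^ α * S := by
        rw [PowerSeries.mul_inv_cancel _ constantCoeff_expSubOneDivX, one_pow, one_mul]
    _ = exp ℚ * expSubOneDivX⁻¹ ^ α := by rw [hexp]; ring

theorem higher_order_daehee_eq_bernoulli_order_poly_at_one_general
    (k : ℕ) (n : ℕ)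
    (D : ℕ → ℚ)
    (hD : logOneAdd ^ k
      = PowerSeries.X ^ k * PowerSeries.mk (fun m => D m / (m.factorial : ℚ)))
    (B : ℕ → ℕ → Polynomial ℚ)
    (hB : ∀ α : ℕ, 1 ≤ α →
      (PowerSeries.X : PowerSeries (Polynomial ℚ)) ^ α * expXT
        = (expP - 1) ^ α
            * PowerSeries.mk (fun m => Polynomial.C ((m.factorial : ℚ)⁻¹) * B α m)) :
    D n = (B (n + k + 1) n).eval 1 := by
  have hBern := congrArg (PowerSeries.map (Polynomial.evalRingHom 1)) (hB (n + k + 1) (by omega))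
  simp only [map_mul, map_pow, map_sub, map_one, PowerSeries.map_X, map_eval_one_expP,
    map_eval_one_expXT] at hBern
  have hDaehee := congrArg (PowerSeries.coeff (n + k)) hD
  rw [logOneAdd_eq_log, coeff_log_pow_eq_coeff_exp_mul_inv_pow,
    ← eq_exp_mul_inv_pow_of_X_pow_mul_exp hBern, PowerSeries.coeff_X_pow_mul,
    PowerSeries.coeff_map, PowerSeries.coeff_mk, PowerSeries.coeff_mk, Polynomial.coe_evalRingHom,
    Polynomial.eval_mul, Polynomial.eval_C] at hDaehee
  field_simp at hDaehee
  exact hDaehee.symm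

/-- For `n ≥ 0`, `k ≥ 1`, the higher-order Daehee numbers `D_n^(k)`,
defined by `(log(1+t)/t)^k = Σ_n D_n^(k) t^n/n!`, satisfy `D_n^(k) = B_n^{(n+k+1)}(1)`,
where `B_n^{(α)}(x)` are the Bernoulli polynomials of order `α`, defined by
`(t/(e^t−1))^α e^{xt} = Σ_n B_n^{(α)}(x) t^n/n!` (encoded multiplicatively as
`t^α e^{xt} = (e^t−1)^α · Σ_n B_n^{(α)}(x) t^n/n!`). -/
theorem higher_order_daehee_eq_bernoulli_order_poly_at_one
    (k : ℕ) (hk : 1 ≤ k) (n : ℕ)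
    (D : ℕ → ℚ)
    (hD : logOneAdd ^ k
      = PowerSeries.X ^ k * PowerSeries.mk (fun m => D m / (m.factorial : ℚ)))
    (B : ℕ → ℕ → Polynomial ℚ)
    (hB : ∀ α : ℕ, 1 ≤ α →
      (PowerSeries.X : PowerSeries (Polynomial ℚ)) ^ α * expXT
        = (expP - 1) ^ α
            * PowerSeries.mk (fun m => Polynomial.C ((m.factorial : ℚ)⁻¹) * B α m)) :
    D n = (B (n + k + 1) n).eval 1 :=
  higher_order_daehee_eq_bernoulli_order_poly_at_one_general k n D hD B hB
end

section
/- For all integers n ≥ 0 and k ≥ 1, the Daehee polynomial of order k satisfies D_n^(k)(x) = B_n^{(n+k+1)}(x+1) as an identity of polynomials in x over ℚ, where B_n^{(α)}(x) denotes the n-th Bernoulli polynomial of order α. -/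
open PowerSeries Polynomial Finset

/-!
Substituting `t ↦ e^t - 1` sends `log (1 + t)` to `t` and `(1 + t)^x` to `e^{xt}` (both by
comparing derivatives), so the Daehee series of order `k` composed with `e^t - 1` is
`(t / (e^t - 1))^k e^{xt}`. Shifting `x ↦ x + 1` multiplies `e^{xt}` by `e^t`, so the Bernoulli
series of order `n + k + 1` at `x + 1` is `(t / (e^t - 1))^(n+1) e^t` times that composite. The
`t^n` coefficient of `(t / (e^t - 1))^(n+1) e^t G(e^t - 1)` is the `t^n` coefficient of `G`: this
is the change of variables `u = e^t - 1` in a residue, and it reduces to the vanishing of the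
`t^j` coefficient of `e^t (t / (e^t - 1))^(j+1)` for `j ≥ 1`.
-/

namespace PowerSeries

section Derivative

variable {R : Type*} [CommSemiring R]

theorem coeff_X_mul_derivative (f : R⟦X⟧) (n : ℕ) :
    coeff n (X * d⁄dX R f) = n * coeff n f := by
  rcases n with _ | n
  · simp
  · rw [coeff_succ_X_mul, coeff_derivative, mul_comm]
    push_cast
    rfl

end Derivative

section RatAlgebra

variable {A : Type*} [CommRing A] [Algebra ℚ A]

theorem constantCoeff_subst_exp_sub_one (f : A⟦X⟧) :
    constantCoeff (f.subst (exp A - 1)) = constantCoeff f := by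
  rw [← coeff_zero_eq_constantCoeff_apply, coeff_subst' HasSubst.exp_sub_one,
    finsum_eq_single _ 0]
  · simp
  · intro d hd
    rw [coeff_zero_eq_constantCoeff_apply, map_pow]
    simp [hd]

theorem eq_C_mul_rescale_exp_of_derivative_eq {c : A} {f : A⟦X⟧}
    (hf : d⁄dX A f = C c * f) : f = C (constantCoeff f) * rescale c (exp A) := by
  ext n
  induction n with
  | zero => simp
  | succ n ih =>
    have h := congrArg (coeff n) hf
    rw [coeff_derivative, coeff_C_mul, ih] at h
    simp only [coeff_C_mul, coeff_rescale, coeff_exp] at h ⊢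
    have hinv : algebraMap ℚ A ((n + 1 : ℚ)⁻¹) * ((n : A) + 1) = 1 := by
      have : (n : A) + 1 = algebraMap ℚ A (n + 1) := by simp
      rw [this, ← map_mul, inv_mul_cancel₀ (by positivity), map_one]
    have hfac : algebraMap ℚ A (1 / ((n + 1).factorial : ℚ))
        = algebraMap ℚ A ((n + 1 : ℚ)⁻¹) * algebraMap ℚ A (1 / (n.factorial : ℚ)) := by
      rw [← map_mul]
      congr 1
      rw [Nat.factorial_succ, Nat.cast_mul, Nat.cast_succ, one_div, one_div, mul_inv]
    linear_combination algebraMap ℚ A ((n + 1 : ℚ)⁻¹) * h - coeff (n + 1) f * hinv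
      - constantCoeff f * c ^ (n + 1) * hfac

theorem mk_neg_one_pow_mul_one_add_X :
    (mk fun n ↦ algebraMap ℚ A ((-1 : ℚ) ^ n)) * (1 + X) = 1 := by
  ext n
  rw [mul_add, mul_one, map_add, coeff_one]
  rcases n with _ | n
  · simp
  · simp [coeff_succ_mul_X, pow_succ]

theorem eq_bernoulliPowerSeries_pow_mul_of_X_pow_mul_eq {k : ℕ} {f g : A⟦X⟧}
    (h : X ^ k * f = (exp A - 1) ^ k * g) : g = bernoulliPowerSeries A ^ k * f := by
  apply X_pow_mul_cancel (k := k)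
  calc X ^ k * g = bernoulliPowerSeries A ^ k * ((exp A - 1) ^ k * g) := by
        rw [← bernoulliPowerSeries_mul_exp_sub_one A, mul_pow, mul_assoc]
    _ = X ^ k * (bernoulliPowerSeries A ^ k * f) := by
        rw [← h]
        ring

theorem subst_exp_sub_one_eq_rescale_exp {c : A} {f : A⟦X⟧}
    (hf : (1 + X) * d⁄dX A f = C c * f) (hf0 : constantCoeff f = 1) :
    f.subst (exp A - 1) = rescale c (exp A) := by
  have hsub : HasSubst (exp A - 1) := HasSubst.exp_sub_one
  have hC : (C c : A⟦X⟧).subst (exp A - 1) = C c := subst_C _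
  have hode := congrArg (substAlgHom hsub) hf
  rw [map_mul, map_mul, map_add, map_one, substAlgHom_X, add_sub_cancel, coe_substAlgHom, hC]
    at hode
  have hderiv : d⁄dX A (f.subst (exp A - 1)) = C c * f.subst (exp A - 1) := by
    rw [derivative_subst hsub, map_sub, derivative_exp, Derivation.map_one_eq_zero, sub_zero,
      mul_comm, hode]
  rw [eq_C_mul_rescale_exp_of_derivative_eq hderiv, constantCoeff_subst_exp_sub_one, hf0, map_one,
    one_mul]

theorem X_mul_derivative_bernoulliPowerSeries :
    X * d⁄dX A (bernoulliPowerSeries A)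
      = bernoulliPowerSeries A - bernoulliPowerSeries A ^ 2 * exp A := by
  have hF := bernoulliPowerSeries_mul_exp_sub_one A
  have h := congrArg (d⁄dX A) hF
  rw [Derivation.leibniz, map_sub, derivative_exp, derivative_one, sub_zero, derivative_X,
    smul_eq_mul, smul_eq_mul] at h
  linear_combination bernoulliPowerSeries A * h - d⁄dX A (bernoulliPowerSeries A) * hF

theorem coeff_bernoulliPowerSeries_pow_succ_mul_exp (n : ℕ) :
    coeff n (bernoulliPowerSeries A ^ (n + 1) * exp A) = if n = 0 then 1 else 0 := by
  rcases n with _ | n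
  · simp [bernoulliPowerSeries]
  have : IsAddTorsionFree A := IsAddTorsionFree.of_module_rat A
  set F := bernoulliPowerSeries A
  -- `X * d⁄dX A` multiplies the `X ^ (n + 1)` coefficient by `n + 1`: the first two terms cancel
  have hode : X * d⁄dX A (F ^ (n + 1))
      = ((n + 1 : ℕ) : A⟦X⟧) * F ^ (n + 1)
        - ((n + 1 : ℕ) : A⟦X⟧) * (F ^ (n + 2) * exp A) := by
    rw [derivative_pow, Nat.add_sub_cancel]
    linear_combination
      ((n + 1 : ℕ) : A⟦X⟧) * F ^ n * X_mul_derivative_bernoulliPowerSeries (A := A)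
  have hc := congrArg (coeff (n + 1)) hode
  rw [coeff_X_mul_derivative, map_sub, ← map_natCast (C (R := A)), coeff_C_mul, coeff_C_mul,
    eq_comm, sub_eq_self, ← nsmul_eq_mul, nsmul_eq_zero_iff_right n.succ_ne_zero] at hc
  simpa using hc

theorem coeff_bernoulliPowerSeries_pow_mul_exp_mul_exp_sub_one_pow {m n : ℕ} (h : m ≤ n) :
    coeff n (bernoulliPowerSeries A ^ (n + 1) * exp A * (exp A - 1) ^ m)
      = if m = n then 1 else 0 := by
  obtain ⟨j, rfl⟩ := Nat.exists_eq_add_of_le h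
  have hsplit : bernoulliPowerSeries A ^ (m + j + 1) * exp A * (exp A - 1) ^ m
      = X ^ m * (bernoulliPowerSeries A ^ (j + 1) * exp A) := by
    rw [← bernoulliPowerSeries_mul_exp_sub_one A, mul_pow]
    ring
  rw [hsplit, coeff_X_pow_mul', if_pos (by omega), Nat.add_sub_cancel_left,
    coeff_bernoulliPowerSeries_pow_succ_mul_exp]
  simp

theorem coeff_bernoulliPowerSeries_pow_mul_exp_mul_subst (G : A⟦X⟧) (n : ℕ) :
    coeff n (bernoulliPowerSeries A ^ (n + 1) * exp A * G.subst (exp A - 1)) = coeff n G := by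
  set M := bernoulliPowerSeries A ^ (n + 1) * exp A
  have hsub : HasSubst (exp A - 1) := HasSubst.exp_sub_one
  nth_rewrite 1 [eq_X_pow_mul_shift_add_trunc (n + 1) G]
  rw [subst_add hsub, subst_mul hsub, subst_pow hsub, subst_X hsub, subst_coe hsub,
    Polynomial.aeval_eq_sum_range' (natDegree_trunc_lt G n), mul_add, map_add]
  have hX : (X : A⟦X⟧) ∣ exp A - 1 := X_dvd_iff.mpr (by simp)
  have hhigh : coeff n (M * ((exp A - 1) ^ (n + 1)
      * (mk fun i ↦ coeff (i + (n + 1)) G).subst (exp A - 1))) = 0 :=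
    X_pow_dvd_iff.mp (((pow_dvd_pow_of_dvd hX _).mul_right _).mul_left _) n n.lt_succ_self
  rw [hhigh, zero_add, Finset.mul_sum, map_sum,
    Finset.sum_eq_single_of_mem n (Finset.self_mem_range_succ n)]
  · rw [mul_smul_comm, coeff_smul,
      coeff_bernoulliPowerSeries_pow_mul_exp_mul_exp_sub_one_pow le_rfl, if_pos rfl, smul_eq_mul,
      mul_one, coeff_trunc, if_pos n.lt_succ_self]
  · intro i hi hin
    rw [mul_smul_comm, coeff_smul, coeff_bernoulliPowerSeries_pow_mul_exp_mul_exp_sub_one_pow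
      (Nat.lt_succ_iff.mp (Finset.mem_range.mp hi)), if_neg hin, smul_zero]

/-- The theorem at a value `c` of `x` in any `ℚ`-algebra. Keeping `subst` away from `A = ℚ[X]`
matters: there `Algebra ℚ[X] ℚ[X]⟦X⟧` resolves to `PowerSeries.algebraPolynomial` (`p ↦ p(t)`),
not to the constant-coefficient algebra of the substitution API. -/
theorem coeff_eq_of_log_pow_mul_eq_of_X_pow_mul_eq {c : A} {k n : ℕ} {P S T : A⟦X⟧}
    (hP : (1 + X) * d⁄dX A P = C c * P) (hP0 : constantCoeff P = 1)
    (hS : log A ^ k * P = X ^ k * S)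
    (hT : X ^ (n + k + 1) * rescale (c + 1) (exp A) = (exp A - 1) ^ (n + k + 1) * T) :
    coeff n T = coeff n S := by
  have hsub : HasSubst (exp A - 1) := HasSubst.exp_sub_one
  have hS' : S.subst (exp A - 1) = bernoulliPowerSeries A ^ k * rescale c (exp A) := by
    apply eq_bernoulliPowerSeries_pow_mul_of_X_pow_mul_eq
    have := congrArg (subst (exp A - 1)) hS
    rwa [subst_mul hsub, subst_mul hsub, subst_pow hsub, subst_pow hsub, log_subst_exp_sub_one,
      subst_X hsub, subst_exp_sub_one_eq_rescale_exp hP hP0] at this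
  have hT' : T = bernoulliPowerSeries A ^ (n + 1) * exp A * S.subst (exp A - 1) := by
    rw [eq_bernoulliPowerSeries_pow_mul_of_X_pow_mul_eq hT, hS', ← exp_mul_exp_eq_exp_add,
      rescale_one, RingHom.id_apply]
    ring
  rw [hT', coeff_bernoulliPowerSeries_pow_mul_exp_mul_subst]

end RatAlgebra

end PowerSeries

theorem logOneAddP_eq_log : logOneAddP = PowerSeries.log ℚ[X] := by
  refine PowerSeries.ext fun n => ?_
  rw [logOneAddP, PowerSeries.coeff_mk, PowerSeries.coeff_log, apply_ite Polynomial.C, map_zero]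
  rfl

theorem expP_eq_exp : expP = PowerSeries.exp ℚ[X] := by
  refine PowerSeries.ext fun n => ?_
  rw [expP, PowerSeries.coeff_mk, PowerSeries.coeff_exp]
  rfl

theorem expXT_eq_rescale_exp :
    expXT = PowerSeries.rescale Polynomial.X (PowerSeries.exp ℚ[X]) := by
  refine PowerSeries.ext fun n => ?_
  rw [expXT, PowerSeries.coeff_mk, PowerSeries.coeff_rescale, PowerSeries.coeff_exp, mul_comm]
  rfl

theorem binomPoly_succ_mul (n : ℕ) :
    binomPoly (n + 1) * ((n : ℚ[X]) + 1) = (Polynomial.X - (n : ℚ[X])) * binomPoly n := by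
  have hfac : Polynomial.C (1 / ((n + 1).factorial : ℚ)) * ((n : ℚ[X]) + 1)
      = Polynomial.C (1 / (n.factorial : ℚ)) := by
    rw [← Polynomial.C_eq_natCast, ← Polynomial.C_1, ← Polynomial.C_add, ← Polynomial.C_mul,
      Nat.factorial_succ]
    congr 1
    push_cast
    field_simp
  simp only [binomPoly, Finset.prod_range_succ, Polynomial.C_eq_natCast]
  linear_combination
    (∏ i ∈ Finset.range n, (Polynomial.X - (i : ℚ[X]))) * (Polynomial.X - n) * hfac

theorem one_add_X_mul_derivative_onePlusTX :
    (1 + PowerSeries.X) * d⁄dX ℚ[X] onePlusTX = PowerSeries.C Polynomial.X * onePlusTX := by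
  refine PowerSeries.ext fun n => ?_
  rw [add_mul, one_mul, map_add, PowerSeries.coeff_X_mul_derivative,
    PowerSeries.coeff_derivative, PowerSeries.coeff_C_mul]
  simp only [onePlusTX, PowerSeries.coeff_mk]
  linear_combination binomPoly_succ_mul n

theorem constantCoeff_onePlusTX : PowerSeries.constantCoeff onePlusTX = 1 := by
  rw [← PowerSeries.coeff_zero_eq_constantCoeff_apply, onePlusTX, PowerSeries.coeff_mk, binomPoly]
  simp

theorem daehee_poly_eq_bernoulli_order_poly_shift_one_general
    (k : ℕ) (n : ℕ)
    (D : ℕ → Polynomial ℚ)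
    (hD : logOneAddP ^ k * onePlusTX
      = PowerSeries.X ^ k
          * PowerSeries.mk (fun m => Polynomial.C ((m.factorial : ℚ)⁻¹) * D m))
    (B : ℕ → ℕ → Polynomial ℚ)
    (hB : ∀ α : ℕ, 1 ≤ α →
      (PowerSeries.X : PowerSeries (Polynomial ℚ)) ^ α * expXT
        = (expP - 1) ^ α
            * PowerSeries.mk (fun m => Polynomial.C ((m.factorial : ℚ)⁻¹) * B α m)) :
    D n = (B (n + k + 1) n).comp (Polynomial.X + 1) := by
  have hT := congrArg (PowerSeries.map (Polynomial.compRingHom (Polynomial.X + 1)))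
    (hB (n + k + 1) (by omega))
  rw [expXT_eq_rescale_exp, expP_eq_exp, map_mul, map_mul, map_pow, map_pow, map_sub, map_one,
    PowerSeries.map_X, PowerSeries.map_exp, ← PowerSeries.rescale_map, PowerSeries.map_exp,
    Polynomial.coe_compRingHom_apply, Polynomial.X_comp] at hT
  rw [logOneAddP_eq_log] at hD
  have h := PowerSeries.coeff_eq_of_log_pow_mul_eq_of_X_pow_mul_eq
    one_add_X_mul_derivative_onePlusTX constantCoeff_onePlusTX hD hT
  rw [PowerSeries.coeff_map, PowerSeries.coeff_mk, PowerSeries.coeff_mk, map_mul,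
    Polynomial.coe_compRingHom_apply, Polynomial.C_comp, Polynomial.coe_compRingHom_apply] at h
  exact (mul_left_cancel₀ (by simp [Nat.factorial_ne_zero]) h).symm

/-- For `n ≥ 0`, `k ≥ 1`, the Daehee polynomials of order `k` satisfy
`D_n^(k)(x) = B_n^{(n+k+1)}(x+1)` in `ℚ[x]`, where `B_n^{(α)}(x)` are the Bernoulli
polynomials of order `α`. -/
theorem daehee_poly_eq_bernoulli_order_poly_shift_one
    (k : ℕ) (hk : 1 ≤ k) (n : ℕ)
    (D : ℕ → Polynomial ℚ)
    (hD : logOneAddP ^ k * onePlusTX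
      = PowerSeries.X ^ k
          * PowerSeries.mk (fun m => Polynomial.C ((m.factorial : ℚ)⁻¹) * D m))
    (B : ℕ → ℕ → Polynomial ℚ)
    (hB : ∀ α : ℕ, 1 ≤ α →
      (PowerSeries.X : PowerSeries (Polynomial ℚ)) ^ α * expXT
        = (expP - 1) ^ α
            * PowerSeries.mk (fun m => Polynomial.C ((m.factorial : ℚ)⁻¹) * B α m)) :
    D n = (B (n + k + 1) n).comp (Polynomial.X + 1) :=
  daehee_poly_eq_bernoulli_order_poly_shift_one_general k n D hD B hB
end

section
/- For all integers n ≥ 0 and k ≥ 1, the Daehee polynomial of the second kind of order k satisfies D̂_n^(k)(x) = Σ_{l=0}^n (−1)^{n−l} S_1(n,l) B_l^{(k)}(−x) as an identity of polynomials in x over ℚ, where S_1 denotes the signed Stirling numbers of the first kind and B_l^{(k)}(x) are the Bernoulli polynomials of order k. -/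
open PowerSeries Polynomial Finset

open scoped Nat

/-!
Write `L = -log(1-t)`. Substituting `t ↦ L` and `x ↦ -x` in the generating function of
`B_n^{(k)}(x)` uses `e^L = 1/(1-t)`, so `e^L - 1 = t/(1-t)` and `e^{-xL} = (1-t)^x`; this turns
`t^k e^{xt} = (e^t-1)^k Σ B_m(x) t^m/m!` into
`((1-t)L)^k (1-t)^x = t^k Σ_m B_m(-x) L^m/m!`. Hence `Σ D̂_n(x) t^n/n! = Σ_m B_m(-x) L^m/m!`,
and the coefficients are read off from `L^m/m! = Σ_n |S_1(n,m)| t^n/n!`, which follows by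
comparing coefficients in `(1-t) (L^{m+1})' = (m+1) L^m`.
-/

theorem ascPochhammer_coeff_eq_stirlingFirst (S : Type*) [CommSemiring S] (n m : ℕ) :
    (ascPochhammer S n).coeff m = Nat.stirlingFirst n m := by
  induction n generalizing m with
  | zero => cases m <;> simp [Nat.stirlingFirst, Polynomial.coeff_one]
  | succ n ih =>
    rw [ascPochhammer_succ_right, mul_add, Polynomial.coeff_add, ← Polynomial.C_eq_natCast,
      Polynomial.coeff_mul_C, ih]
    cases m with
    | zero => cases n <;> simp [Nat.stirlingFirst]
    | succ m => rw [Polynomial.coeff_mul_X, ih, Nat.stirlingFirst_succ_succ]; push_cast; ring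

theorem ascPochhammer_eval_eq_sum_stirlingFirst {S : Type*} [CommSemiring S] (n : ℕ) (y : S) :
    (ascPochhammer S n).eval y = ∑ m ∈ range (n + 1), (Nat.stirlingFirst n m : S) * y ^ m := by
  have hdeg : (ascPochhammer S n).natDegree < n + 1 := by
    refine Nat.lt_succ_of_le (Polynomial.natDegree_le_iff_coeff_eq_zero.mpr fun m hm => ?_)
    rw [ascPochhammer_coeff_eq_stirlingFirst,
      Nat.stirlingFirst_eq_zero_of_lt (by exact_mod_cast hm), Nat.cast_zero]
  simp only [Polynomial.eval_eq_sum_range' hdeg, ascPochhammer_coeff_eq_stirlingFirst]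

theorem neg_one_pow_mul_prod_X_sub_C_eq_sum_stirlingFirst {R : Type*} [CommRing R] (n : ℕ) :
    (-1) ^ n * ∏ i ∈ range n, (Polynomial.X - Polynomial.C (i : R)) =
      ∑ m ∈ range (n + 1), (Nat.stirlingFirst n m : R[X]) * (-Polynomial.X) ^ m := by
  rw [← ascPochhammer_eval_eq_sum_stirlingFirst, ascPochhammer_eval_neg_eq_descPochhammer,
    descPochhammer_eval_eq_prod_range]
  simp

theorem neg_one_pow_mul_coeff_prod_X_sub_C {R : Type*} [CommRing R] (n l : ℕ) :
    (-1 : R) ^ (n - l) * (∏ i ∈ range n, (Polynomial.X - Polynomial.C (i : R))).coeff l =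
      Nat.stirlingFirst n l := by
  have h := congrArg (Polynomial.coeff · l)
    (neg_one_pow_mul_prod_X_sub_C_eq_sum_stirlingFirst (R := R) n)
  have hC : ∀ m : ℕ, (Nat.stirlingFirst n m : R[X]) * (-Polynomial.X) ^ m =
      Polynomial.C ((-1 : R) ^ m * Nat.stirlingFirst n m) * Polynomial.X ^ m := by
    intro m
    rw [neg_pow, map_mul, map_pow, map_neg, map_one, map_natCast]
    ring
  have hC' : ((-1 : R[X]) ^ n) = Polynomial.C ((-1) ^ n) := by simp
  simp only [hC, hC', Polynomial.finsetSum_coeff, Polynomial.coeff_C_mul, Polynomial.coeff_X_pow,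
    mul_ite, mul_one, mul_zero, sum_ite_eq, mem_range] at h
  have hsq : ∀ j : ℕ, ((-1 : R) ^ j) ^ 2 = 1 := fun j => by
    rw [← pow_mul, mul_comm, pow_mul, neg_one_sq, one_pow]
  set p := (∏ i ∈ range n, (Polynomial.X - Polynomial.C (i : R))).coeff l
  by_cases hl : l ≤ n
  · have hsplit : (-1 : R) ^ n = (-1) ^ (n - l) * (-1) ^ l := by
      rw [← pow_add, Nat.sub_add_cancel hl]
    rw [if_pos (Nat.lt_succ_of_le hl), hsplit] at h
    linear_combination
      (-1 : R) ^ l * h + (Nat.stirlingFirst n l - (-1 : R) ^ (n - l) * p) * hsq l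
  · rw [if_neg (by omega)] at h
    rw [Nat.stirlingFirst_eq_zero_of_lt (by omega), Nat.cast_zero]
    linear_combination (-1 : R) ^ (n - l) * (-1 : R) ^ n * h - (-1 : R) ^ (n - l) * p * hsq n

theorem stirlingFirst_eq_neg_one_pow_mul_of_prod_X_sub_C_eq {R : Type*} [CommRing R] {n : ℕ}
    {s : ℕ → R}
    (hs : ∏ i ∈ range n, (Polynomial.X - Polynomial.C (i : R)) =
      ∑ l ∈ range (n + 1), Polynomial.C (s l) * Polynomial.X ^ l)
    {l : ℕ} (hl : l ≤ n) :
    (Nat.stirlingFirst n l : R) = (-1) ^ (n - l) * s l := by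
  rw [← neg_one_pow_mul_coeff_prod_X_sub_C, hs]
  simp [Polynomial.finsetSum_coeff, Polynomial.coeff_X_pow, Nat.lt_succ_of_le hl]

theorem one_sub_X_mul_derivative_negLogOneSub :
    (1 - PowerSeries.X) * d⁄dX ℚ negLogOneSub = 1 := by
  have : d⁄dX ℚ negLogOneSub = PowerSeries.mk 1 := by
    ext n
    rw [PowerSeries.coeff_derivative, negLogOneSub, PowerSeries.coeff_mk, if_neg n.succ_ne_zero]
    field_simp
    simp
  rw [this, mul_comm, PowerSeries.mk_one_mul_one_sub_eq_one]

theorem one_sub_X_mul_derivative_negLogOneSub_pow (m : ℕ) :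
    (1 - PowerSeries.X) * d⁄dX ℚ (negLogOneSub ^ (m + 1)) =
      PowerSeries.C ((m : ℚ) + 1) * negLogOneSub ^ m := by
  rw [Derivation.leibniz_pow, Nat.add_sub_cancel, smul_eq_mul, nsmul_eq_mul,
    mul_left_comm, mul_left_comm _ _ (d⁄dX ℚ negLogOneSub),
    one_sub_X_mul_derivative_negLogOneSub, mul_one, ← map_natCast PowerSeries.C]
  push_cast
  rfl

theorem coeff_negLogOneSub_pow_succ_succ (n m : ℕ) :
    (n + 1) * PowerSeries.coeff (n + 1) (negLogOneSub ^ (m + 1)) =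
      n * PowerSeries.coeff n (negLogOneSub ^ (m + 1)) +
        (m + 1) * PowerSeries.coeff n (negLogOneSub ^ m) := by
  have h := congrArg (PowerSeries.coeff n) (one_sub_X_mul_derivative_negLogOneSub_pow m)
  rw [sub_mul, one_mul, map_sub, PowerSeries.coeff_derivative, PowerSeries.coeff_C_mul] at h
  cases n with
  | zero => simpa [PowerSeries.coeff_zero_eq_constantCoeff_apply, mul_comm] using h
  | succ n =>
    rw [PowerSeries.coeff_succ_X_mul, PowerSeries.coeff_derivative] at h
    push_cast at h ⊢
    linear_combination h

theorem factorial_mul_coeff_negLogOneSub_pow (n m : ℕ) :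
    (n ! : ℚ) * PowerSeries.coeff n (negLogOneSub ^ m) = m ! * Nat.stirlingFirst n m := by
  induction n generalizing m with
  | zero =>
    cases m <;>
      simp [Nat.stirlingFirst, PowerSeries.coeff_zero_eq_constantCoeff_apply, negLogOneSub]
  | succ n ih =>
    cases m with
    | zero => simp [PowerSeries.coeff_one]
    | succ m =>
      have ih' := ih (m + 1)
      rw [Nat.factorial_succ m] at ih'
      rw [Nat.factorial_succ, Nat.factorial_succ, Nat.stirlingFirst_succ_succ]
      push_cast at ih' ⊢
      linear_combination (n ! : ℚ) * coeff_negLogOneSub_pow_succ_succ n m + (n : ℚ) * ih'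
        + ((m : ℚ) + 1) * ih m

theorem coeff_negLogOneSub_pow (n m : ℕ) :
    PowerSeries.coeff n (negLogOneSub ^ m) = m ! * Nat.stirlingFirst n m / n ! := by
  rw [eq_div_iff (by positivity), mul_comm, factorial_mul_coeff_negLogOneSub_pow]

section Egf

variable {A : Type*} [CommRing A] [Algebra ℚ A]

noncomputable def egf (b : ℕ → A) : A⟦X⟧ :=
  PowerSeries.mk fun n => algebraMap ℚ A (n ! : ℚ)⁻¹ * b n

@[simp]
theorem coeff_egf (b : ℕ → A) (n : ℕ) :
    PowerSeries.coeff n (egf b) = algebraMap ℚ A (n ! : ℚ)⁻¹ * b n :=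
  PowerSeries.coeff_mk _ _

theorem egf_injective : Function.Injective (egf : (ℕ → A) → A⟦X⟧) := by
  intro b b' h
  funext n
  have hn := congrArg (PowerSeries.coeff n) h
  simp only [coeff_egf] at hn
  exact ((IsUnit.mk0 _ (by positivity)).map (algebraMap ℚ A)).mul_left_cancel hn

theorem map_egf {A' : Type*} [CommRing A'] [Algebra ℚ A'] (f : A →+* A') (b : ℕ → A) :
    PowerSeries.map f (egf b) = egf (f ∘ b) := by
  ext n
  simp [RingHom.map_rat_algebraMap]

theorem hasSubst_map_negLogOneSub :
    PowerSeries.HasSubst (PowerSeries.map (algebraMap ℚ A) negLogOneSub) :=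
  PowerSeries.HasSubst.of_constantCoeff_zero'
    (by simp [negLogOneSub, ← PowerSeries.coeff_zero_eq_constantCoeff_apply])

theorem subst_map_negLogOneSub_egf (b : ℕ → A) :
    (egf b).subst (PowerSeries.map (algebraMap ℚ A) negLogOneSub) =
      egf fun n => ∑ m ∈ range (n + 1), (Nat.stirlingFirst n m : A) * b m := by
  ext n
  simp only [PowerSeries.coeff_subst' hasSubst_map_negLogOneSub, ← map_pow,
    PowerSeries.coeff_map, coeff_negLogOneSub_pow, coeff_egf, smul_eq_mul, mul_sum]
  rw [finsum_eq_sum_of_support_subset (s := range (n + 1))]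
  · refine sum_congr rfl fun m _ => ?_
    have hfac :
        algebraMap ℚ A (m ! : ℚ)⁻¹ * algebraMap ℚ A (m ! * Nat.stirlingFirst n m / n !) =
        algebraMap ℚ A (n ! : ℚ)⁻¹ * Nat.stirlingFirst n m := by
      rw [← map_natCast (algebraMap ℚ A), ← map_mul, ← map_mul]
      field_simp
    linear_combination b m * hfac
  · intro m hm
    rw [coe_range, Set.mem_Iio]
    by_contra! h
    exact hm (by simp [Nat.stirlingFirst_eq_zero_of_lt h])

theorem subst_map_negLogOneSub_egf_pow (y : A) :
    (egf fun m => y ^ m).subst (PowerSeries.map (algebraMap ℚ A) negLogOneSub) =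
      egf fun n => (ascPochhammer A n).eval y := by
  simp only [subst_map_negLogOneSub_egf, ascPochhammer_eval_eq_sum_stirlingFirst]

theorem one_sub_X_mul_subst_map_negLogOneSub_egf_one :
    (1 - PowerSeries.X) * (egf fun _ => (1 : A)).subst
      (PowerSeries.map (algebraMap ℚ A) negLogOneSub) = 1 := by
  have hgeom : (egf fun n => (ascPochhammer A n).eval 1) = PowerSeries.mk 1 := by
    ext n
    rw [coeff_egf, ascPochhammer_eval_one, ← map_natCast (algebraMap ℚ A), ← map_mul,
      inv_mul_cancel₀ (by positivity), map_one, PowerSeries.coeff_mk, Pi.one_apply]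
  have hone : (egf fun _ => (1 : A)) = egf fun m => (1 : A) ^ m := by simp_rw [one_pow]
  rw [hone, subst_map_negLogOneSub_egf_pow, hgeom, mul_comm,
    PowerSeries.mk_one_mul_one_sub_eq_one]

end Egf

theorem negLogOneSubP_eq_map :
    negLogOneSubP = PowerSeries.map (algebraMap ℚ ℚ[X]) negLogOneSub := by
  ext n
  simp [negLogOneSubP, negLogOneSub]

theorem expP_eq_egf : expP = egf fun _ => 1 := by
  ext n
  simp [expP]

theorem expXT_eq_egf : expXT = egf fun m => Polynomial.X ^ m := by
  ext n
  simp [expXT]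

theorem subst_map_negLogOneSub_egf_neg_X_pow :
    (egf fun m => (-Polynomial.X : ℚ[X]) ^ m).subst
      (PowerSeries.map (algebraMap ℚ ℚ[X]) negLogOneSub) = oneSubTX := by
  rw [subst_map_negLogOneSub_egf_pow]
  refine PowerSeries.ext fun n => ?_
  rw [coeff_egf, ascPochhammer_eval_neg_eq_descPochhammer, descPochhammer_eval_eq_prod_range]
  simp [oneSubTX, binomPoly]
  ring

theorem egf_eq_mk_C (b : ℕ → ℚ[X]) :
    egf b = PowerSeries.mk fun m => Polynomial.C ((m ! : ℚ)⁻¹) * b m := rfl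

theorem one_sub_X_mul_negLogOneSubP_pow_mul_oneSubTX {k : ℕ} {B : ℕ → ℚ[X]}
    (hB : PowerSeries.X ^ k * expXT = (expP - 1) ^ k * egf B) :
    ((1 - PowerSeries.X) * negLogOneSubP) ^ k * oneSubTX = PowerSeries.X ^ k *
      egf fun n => ∑ m ∈ range (n + 1),
        (Nat.stirlingFirst n m : ℚ[X]) * (B m).comp (-Polynomial.X) := by
  set L := PowerSeries.map (algebraMap ℚ ℚ[X]) negLogOneSub
  set E : ℚ[X]⟦X⟧ := (egf fun _ => (1 : ℚ[X])).subst L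
  set G := egf fun n => ∑ m ∈ range (n + 1),
    (Nat.stirlingFirst n m : ℚ[X]) * (B m).comp (-Polynomial.X)
  have hsubst : L ^ k * oneSubTX = (E - 1) ^ k * G := by
    have hL : PowerSeries.HasSubst L := hasSubst_map_negLogOneSub
    have h := congrArg
      (fun f => (PowerSeries.map (Polynomial.compRingHom (-Polynomial.X)) f).subst L) hB
    simp only [map_mul, map_pow, map_sub, map_one, PowerSeries.map_X, expP_eq_egf, expXT_eq_egf,
      map_egf, Function.comp_def, Polynomial.coe_compRingHom_apply, Polynomial.X_comp,
      ← PowerSeries.coe_substAlgHom hL] at h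
    rwa [PowerSeries.substAlgHom_X, PowerSeries.coe_substAlgHom,
      subst_map_negLogOneSub_egf_neg_X_pow,
      subst_map_negLogOneSub_egf fun m => (B m).comp (-Polynomial.X)] at h
  have hE : (1 - PowerSeries.X) ^ k * (E - 1) ^ k = PowerSeries.X ^ k := by
    rw [← mul_pow, mul_sub, one_sub_X_mul_subst_map_negLogOneSub_egf_one]
    ring
  rw [negLogOneSubP_eq_map, mul_pow]
  linear_combination (1 - PowerSeries.X) ^ k * hsubst + G * hE

theorem daehee_second_kind_poly_eq_unsigned_stirling_bernoulli_neg_sum_general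
    (k : ℕ) (n : ℕ)
    (Dh : ℕ → Polynomial ℚ)
    (hDh : ((1 - PowerSeries.X) * negLogOneSubP) ^ k * oneSubTX
      = PowerSeries.X ^ k
          * PowerSeries.mk (fun m => Polynomial.C ((m.factorial : ℚ)⁻¹) * Dh m))
    (S1 : ℕ → ℕ → ℤ)
    (hS1 : ∀ m : ℕ,
      (∏ i ∈ Finset.range m, (Polynomial.X - Polynomial.C (i : ℚ)))
        = ∑ l ∈ Finset.range (m + 1), Polynomial.C ((S1 m l : ℚ)) * Polynomial.X ^ l)
    (B : ℕ → Polynomial ℚ)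
    (hB : (PowerSeries.X : PowerSeries (Polynomial ℚ)) ^ k * expXT
      = (expP - 1) ^ k
          * PowerSeries.mk (fun m => Polynomial.C ((m.factorial : ℚ)⁻¹) * B m)) :
    Dh n = ∑ l ∈ Finset.range (n + 1),
      Polynomial.C ((-1 : ℚ) ^ (n - l) * (S1 n l : ℚ)) * (B l).comp (-Polynomial.X) := by
  rw [← egf_eq_mk_C] at hDh hB
  have hgf := mul_left_cancel₀ (pow_ne_zero k PowerSeries.X_ne_zero)
    (hDh.symm.trans (one_sub_X_mul_negLogOneSubP_pow_mul_oneSubTX hB))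
  rw [congrFun (egf_injective hgf) n]
  refine sum_congr rfl fun l hl => ?_
  rw [← Polynomial.C_eq_natCast, stirlingFirst_eq_neg_one_pow_mul_of_prod_X_sub_C_eq (hS1 n)
    (Nat.lt_succ_iff.mp (mem_range.mp hl))]

/-- For `n ≥ 0`, `k ≥ 1`, the Daehee polynomials of the second kind of
order `k`, defined by `((1−t)log(1−t)/(−t))^k (1−t)^x = Σ_n D̂_n^(k)(x) t^n/n!` (encoded
multiplicatively), satisfy `D̂_n^(k)(x) = Σ_{l=0}^n (−1)^{n−l} S_1(n,l) B_l^{(k)}(−x)`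
in `ℚ[x]`. -/
theorem daehee_second_kind_poly_eq_unsigned_stirling_bernoulli_neg_sum
    (k : ℕ) (hk : 1 ≤ k) (n : ℕ)
    (Dh : ℕ → Polynomial ℚ)
    (hDh : ((1 - PowerSeries.X) * negLogOneSubP) ^ k * oneSubTX
      = PowerSeries.X ^ k
          * PowerSeries.mk (fun m => Polynomial.C ((m.factorial : ℚ)⁻¹) * Dh m))
    (S1 : ℕ → ℕ → ℤ)
    (hS1 : ∀ m : ℕ,
      (∏ i ∈ Finset.range m, (Polynomial.X - Polynomial.C (i : ℚ)))
        = ∑ l ∈ Finset.range (m + 1), Polynomial.C ((S1 m l : ℚ)) * Polynomial.X ^ l)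
    (B : ℕ → Polynomial ℚ)
    (hB : (PowerSeries.X : PowerSeries (Polynomial ℚ)) ^ k * expXT
      = (expP - 1) ^ k
          * PowerSeries.mk (fun m => Polynomial.C ((m.factorial : ℚ)⁻¹) * B m)) :
    Dh n = ∑ l ∈ Finset.range (n + 1),
      Polynomial.C ((-1 : ℚ) ^ (n - l) * (S1 n l : ℚ)) * (B l).comp (-Polynomial.X) :=
  daehee_second_kind_poly_eq_unsigned_stirling_bernoulli_neg_sum_general k n Dh hDh S1 hS1 B hB
end
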